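/- For the polynomial W = x³ + xy⁷ (the singularity E_{19}), the maximal diagonal symmetry group is cyclic of order 21, generated by the exponential of the weight vector, J = (e^{2πi/3}, e^{2πi·2/21}). That is, a pair (λ,μ) of complex numbers satisfies W(λx, μy) = W(x,y) — equivalently λ³ = 1 and λμ⁷ = 1 — if and only if (λ,μ) = (e^{2πim/3}, e^{2πi·2m/21}) for some integer m, and the group of such pairs has exactly 21 elements. In particular the maximal symmetry group equals its minimal admissible subgroup ⟨J⟩. -/

import Mathlib

open MvPolynomial

/-- The polynomial x³ + xy⁷ (the singularity E_{19}). -/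
noncomputable def W18 : MvPolynomial (Fin 2) ℂ := MvPolynomial.X 0 ^ 3 + MvPolynomial.X 0 * MvPolynomial.X 1 ^ 7

/-- A diagonal rescaling `x ↦ λx, y ↦ μy` fixes `W18`. -/
def IsDiagSym18 (lam mu : ℂ) : Prop :=
  MvPolynomial.aeval (fun j => MvPolynomial.C (![lam, mu] j) * MvPolynomial.X j) W18 = W18


lemma key18 (lam mu : ℂ) : IsDiagSym18 lam mu ↔ (lam ^ 3 = 1 ∧ lam * mu ^ 7 = 1) := by
  constructor
  · intro h
    have h1 := congrArg (eval ![1,0]) h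
    have h2 := congrArg (eval ![1,1]) h
    simp [W18, IsDiagSym18] at h1 h2
    exact ⟨h1, by linear_combination h2 - h1⟩
  · intro ⟨h1, h2⟩
    unfold IsDiagSym18 W18
    simp only [map_add, map_mul, map_pow, aeval_X, Matrix.cons_val_zero, Matrix.cons_val_one, Matrix.head_cons]
    rw [mul_pow, ← C_pow, h1, C_1, one_mul, mul_pow, ← C_pow]
    ring_nf
    rw [mul_assoc (X 0), ← C_mul, h2, C_1, mul_one]

lemma mu21 {lam mu : ℂ} (h1 : lam ^ 3 = 1) (h2 : lam * mu ^ 7 = 1) : mu ^ 21 = 1 := by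
  linear_combination ((lam*mu^7)^2 + lam*mu^7 + 1) * h2 - mu^21 * h1

lemma lam_eq {lam mu : ℂ} (h1 : lam ^ 3 = 1) (h2 : lam * mu ^ 7 = 1) : lam = mu ^ 14 := by
  linear_combination mu^14 * h1 - lam*(1+lam*mu^7)*h2

lemma exp_congr (a b : ℂ) (n : ℤ) (h : a = b + (n:ℂ)*(2*(Real.pi:ℂ)*Complex.I)) :
    Complex.exp a = Complex.exp b := by
  rw [h, Complex.exp_add, Complex.exp_int_mul_two_pi_mul_I, mul_one]

lemma exp_param {lam mu : ℂ} (h1 : lam ^ 3 = 1) (h2 : lam * mu ^ 7 = 1) :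
    ∃ m : ℤ, lam = Complex.exp (2 * (Real.pi : ℂ) * Complex.I * ((m : ℂ) / 3))
      ∧ mu = Complex.exp (2 * (Real.pi : ℂ) * Complex.I * (2 * (m : ℂ) / 21)) := by
  have h3 := mu21 h1 h2
  have hprim := Complex.isPrimitiveRoot_exp 21 (by norm_num)
  obtain ⟨k, hk, hζ⟩ := hprim.eq_pow_of_pow_eq_one h3
  refine ⟨11 * k, ?_, ?_⟩
  · rw [lam_eq h1 h2, ← hζ, ← pow_mul, ← Complex.exp_nat_mul]
    refine (exp_congr _ _ (3*k) ?_).symm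
    push_cast; ring
  · rw [← hζ, ← Complex.exp_nat_mul]
    refine (exp_congr _ _ k ?_).symm
    push_cast; ring

noncomputable def symEquiv18 : {p : ℂ × ℂ // IsDiagSym18 p.1 p.2} ≃ {x : ℂ // x ∈ Polynomial.nthRootsFinset 21 (1 : ℂ)} where
  toFun p := ⟨p.1.2, by
    obtain ⟨h1, h2⟩ := (key18 p.1.1 p.1.2).mp p.2
    rw [Polynomial.mem_nthRootsFinset (by norm_num) (1 : ℂ)]
    exact mu21 h1 h2⟩
  invFun x := ⟨(x.1 ^ 14, x.1), (key18 _ _).mpr (by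
    have hx : x.1 ^ 21 = 1 := (Polynomial.mem_nthRootsFinset (by norm_num) (1 : ℂ)).mp x.2
    constructor
    · linear_combination (x.1^21 + 1) * hx
    · rw [← pow_add] at *; simpa using hx)⟩
  left_inv p := by
    obtain ⟨h1, h2⟩ := (key18 p.1.1 p.1.2).mp p.2
    exact Subtype.ext (Prod.ext (lam_eq h1 h2).symm rfl)
  right_inv x := rfl

/-- For `W = x³ + xy⁷` (E_{19}), the maximal diagonal symmetry group is cyclic of order 21, generated by `J = (e^{2πi/3}, e^{2πi·2/21})`; in particular `G_W^max = ⟨J⟩`. -/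
theorem max_symmetry_group_18 :
    (∀ lam mu : ℂ, IsDiagSym18 lam mu ↔ (lam ^ 3 = 1 ∧ lam * mu ^ 7 = 1))
    ∧ (∀ lam mu : ℂ, IsDiagSym18 lam mu
        ↔ ∃ m : ℤ, lam = Complex.exp (2 * (Real.pi : ℂ) * Complex.I * ((m : ℂ) / 3))
            ∧ mu = Complex.exp (2 * (Real.pi : ℂ) * Complex.I * (2 * (m : ℂ) / 21)))
    ∧ Nat.card {p : ℂ × ℂ // IsDiagSym18 p.1 p.2} = 21 := by
  refine ⟨key18, fun lam mu => ?_, ?_⟩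
  · rw [key18]
    constructor
    · intro ⟨h1, h2⟩; exact exp_param h1 h2
    · rintro ⟨m, rfl, rfl⟩
      constructor
      · rw [← Complex.exp_nat_mul]
        exact exp_congr _ 0 m (by push_cast; ring) |>.trans Complex.exp_zero
      · rw [← Complex.exp_nat_mul, ← Complex.exp_add]
        exact exp_congr _ 0 m (by push_cast; ring) |>.trans Complex.exp_zero
  · rw [Nat.card_congr symEquiv18, Nat.card_eq_finsetCard,
      (Complex.isPrimitiveRoot_exp 21 (by norm_num)).card_nthRootsFinset]
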